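/- Let φ, dφ : ℂ → ℂ be bounded measurable functions. Then the difference quotient (T∘(φ + ε dφ) − T∘φ)/ε converges to the pointwise Fréchet derivative T'_{φ(z)}(dφ(z)) uniformly in z ∈ ℂ as ε → 0, i.e., ‖(T(φ + ε dφ) − T(φ))/ε − T'_φ(dφ)‖_∞ → 0. -/

import Mathlib

/-!
Away from `0`, `T` is a quotient of smooth maps. At `0` the estimate
`‖T y - T z - (y - z)‖ ≤ (‖z‖ + ‖y‖ (1 + ‖z‖)) ‖y - z‖` gives `‖T'_z - id‖ ≤ ‖z‖ (2 + ‖z‖)`, so `T'`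
is continuous there too and `T` is `C¹`. For a `C¹` map on a proper space, the mean value
inequality and the uniform continuity of the derivative on a compact ball make the difference
quotients converge uniformly on bounded sets of base points and directions. `φ` and `dφ` take
values in such sets.
-/

noncomputable def T : ℂ → ℂ := fun z => z / (1 + ‖z‖)

open Filter Topology

section
variable {E F : Type*} [NormedAddCommGroup E] [NormedSpace ℝ E] [NormedAddCommGroup F]
  [NormedSpace ℝ F]

lemma HasFDerivAt.norm_sub_le_of_continuousAt {f : E → F} {f' L : E →L[ℝ] F} {x : E}
    (hf : HasFDerivAt f f' x) {g : E → ℝ} (hg : ContinuousAt g x) (hg₀ : 0 ≤ g x)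
    (hbound : ∀ᶠ y in 𝓝 x, ‖f y - f x - L (y - x)‖ ≤ g y * ‖y - x‖) : ‖f' - L‖ ≤ g x := by
  refine le_of_forall_pos_le_add fun ε hε => (hf.sub L.hasFDerivAt).le_of_lip' (by positivity) ?_
  filter_upwards [hbound, hg.eventually (eventually_le_nhds (lt_add_of_pos_right _ hε))]
    with y hy hgy
  calc ‖f y - L y - (f x - L x)‖ = ‖f y - f x - L (y - x)‖ := by rw [map_sub]; abel_nf
    _ ≤ g y * ‖y - x‖ := hy
    _ ≤ (g x + ε) * ‖y - x‖ := by gcongr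

lemma exists_pos_norm_add_sub_sub_fderiv_le_on_closedBall [ProperSpace E] {f : E → F}
    {f' : E → E →L[ℝ] F} (hf : ∀ x, HasFDerivAt f (f' x) x) (hf' : Continuous f') (R : ℝ)
    {δ : ℝ} (hδ : 0 < δ) :
    ∃ η > 0, ∀ x ∈ Metric.closedBall (0 : E) R, ∀ w : E, ‖w‖ < η →
      ‖f (x + w) - f x - f' x w‖ ≤ δ * ‖w‖ := by
  set K := Metric.closedBall (0 : E) (R + 1)
  obtain ⟨η, hη, hf'K⟩ := Metric.uniformContinuousOn_iff_le.1
    ((isCompact_closedBall 0 (R + 1)).uniformContinuousOn_of_continuous hf'.continuousOn) δ hδ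
  refine ⟨min η 1, by positivity, fun x hx w hw => ?_⟩
  have hxK : x ∈ K := Metric.closedBall_subset_closedBall (by linarith) hx
  set s := K ∩ Metric.ball x (min η 1)
  have hxs : x ∈ s := ⟨hxK, Metric.mem_ball_self (by positivity)⟩
  have hxws : x + w ∈ s := by
    refine ⟨?_, by simpa using hw⟩
    rw [mem_closedBall_zero_iff] at hx ⊢
    linarith [norm_add_le x w, hw.trans_le (min_le_right η 1)]
  have hbound : ∀ y ∈ s, ‖f' y - f' x‖ ≤ δ := fun y hy =>
    dist_eq_norm (f' y) (f' x) ▸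
      hf'K y hy.1 x hxK ((Metric.mem_ball.1 hy.2).le.trans (min_le_left _ _))
  simpa using (convex_closedBall _ _).inter (convex_ball _ _)
    |>.norm_image_sub_le_of_norm_hasFDerivWithin_le' (fun y _ => (hf y).hasFDerivWithinAt)
      hbound hxs hxws

theorem tendstoUniformly_differenceQuotient_of_continuous_fderiv [ProperSpace E] {ι : Type*}
    {f : E → F} {f' : E → E →L[ℝ] F} (hf : ∀ x, HasFDerivAt f (f' x) x) (hf' : Continuous f')
    {a v : ι → E} (ha : Bornology.IsBounded (Set.range a))
    (hv : Bornology.IsBounded (Set.range v)) :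
    TendstoUniformly (fun (t : ℝ) i => t⁻¹ • (f (a i + t • v i) - f (a i)))
      (fun i => f' (a i) (v i)) (𝓝[≠] 0) := by
  obtain ⟨Ra, -, hRa⟩ := ha.exists_pos_norm_le
  obtain ⟨Rv, hRv, hRv'⟩ := hv.exists_pos_norm_le
  rw [Metric.tendstoUniformly_iff]
  intro δ hδ
  obtain ⟨η, hη, hf_near⟩ := exists_pos_norm_add_sub_sub_fderiv_le_on_closedBall hf hf' Ra
    (δ := δ / (2 * Rv)) (by positivity)
  have ht_small : ∀ᶠ t : ℝ in 𝓝 0, |t| * Rv < η :=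
    (by fun_prop : Continuous fun t : ℝ => |t| * Rv).tendsto 0 |>.eventually
      (gt_mem_nhds (by simpa using hη))
  filter_upwards [eventually_nhdsWithin_of_eventually_nhds ht_small, self_mem_nhdsWithin]
    with t ht (ht₀ : t ≠ 0) i
  have hvi : ‖v i‖ ≤ Rv := hRv' _ ⟨i, rfl⟩
  have htv : ‖t • v i‖ ≤ |t| * Rv := by rw [norm_smul, Real.norm_eq_abs]; gcongr
  have hmain := hf_near (a i) (mem_closedBall_zero_iff.2 (hRa _ ⟨i, rfl⟩)) (t • v i)
    (htv.trans_lt ht)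
  rw [dist_eq_norm, norm_sub_rev]
  calc ‖t⁻¹ • (f (a i + t • v i) - f (a i)) - f' (a i) (v i)‖
      = ‖t⁻¹ • (f (a i + t • v i) - f (a i) - f' (a i) (t • v i))‖ := by
        rw [map_smul, smul_sub t⁻¹ (_ - _), smul_smul, inv_mul_cancel₀ ht₀, one_smul]
    _ = |t|⁻¹ * ‖f (a i + t • v i) - f (a i) - f' (a i) (t • v i)‖ := by
        rw [norm_smul, Real.norm_eq_abs, abs_inv]
    _ ≤ |t|⁻¹ * (δ / (2 * Rv) * (|t| * Rv)) := by grw [hmain, htv]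
    _ = δ / 2 := by field_simp
    _ < δ := half_lt_self hδ

end

lemma T_eq_smul (z : ℂ) : T z = (1 + ‖z‖)⁻¹ • z := by
  rw [T, Complex.real_smul, div_eq_inv_mul]; push_cast; rfl

lemma contDiffAt_T {z : ℂ} (hz : z ≠ 0) : ContDiffAt ℝ 1 T z := by
  simp only [funext T_eq_smul]
  exact (((contDiffAt_const.add (contDiffAt_norm ℝ hz)).inv (by positivity))).smul contDiffAt_id

lemma norm_T_sub_T_sub_le (y z : ℂ) :
    ‖T y - T z - (y - z)‖ ≤ (‖z‖ + ‖y‖ * (1 + ‖z‖)) * ‖y - z‖ := by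
  have key : T y - T z - (y - z) =
      (((‖z‖ - ‖y‖ : ℝ) : ℂ) * z - ((‖y‖ * (1 + ‖z‖) : ℝ) : ℂ) * (y - z))
        / (((1 + ‖y‖) * (1 + ‖z‖) : ℝ) : ℂ) := by
    have : (1 + (‖y‖ : ℂ)) ≠ 0 := by norm_cast; positivity
    have : (1 + (‖z‖ : ℂ)) ≠ 0 := by norm_cast; positivity
    simp only [T]; push_cast; field_simp; ring
  have hden : 1 ≤ (1 + ‖y‖) * (1 + ‖z‖) := by nlinarith [norm_nonneg y, norm_nonneg z]
  rw [key, norm_div, Complex.norm_real, Real.norm_of_nonneg (by positivity)]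
  refine (div_le_self (norm_nonneg _) hden).trans ?_
  calc _ ≤ |‖z‖ - ‖y‖| * ‖z‖ + ‖y‖ * (1 + ‖z‖) * ‖y - z‖ := by
        refine (norm_sub_le _ _).trans_eq ?_
        rw [norm_mul, norm_mul, Complex.norm_real, Complex.norm_real, Real.norm_eq_abs,
          Real.norm_of_nonneg (by positivity)]
    _ ≤ ‖y - z‖ * ‖z‖ + ‖y‖ * (1 + ‖z‖) * ‖y - z‖ := by
        gcongr; rw [norm_sub_rev y z]; exact abs_norm_sub_norm_le z y
    _ = _ := by ring

lemma norm_sub_id_le_of_hasFDerivAt_T {D : ℂ →L[ℝ] ℂ} {z : ℂ} (hD : HasFDerivAt T D z) :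
    ‖D - ContinuousLinearMap.id ℝ ℂ‖ ≤ ‖z‖ * (2 + ‖z‖) :=
  (hD.norm_sub_le_of_continuousAt (by fun_prop) (by positivity)
    (.of_forall fun y => norm_T_sub_T_sub_le y z)).trans_eq (by ring)

lemma continuous_of_hasFDerivAt_T {D : ℂ → ℂ →L[ℝ] ℂ} (hD : ∀ z, HasFDerivAt T (D z) z) :
    Continuous D := by
  have hD₀ : D 0 = ContinuousLinearMap.id ℝ ℂ := by
    simpa [sub_eq_zero] using norm_sub_id_le_of_hasFDerivAt_T (hD 0)
  refine continuous_iff_continuousAt.2 fun z => ?_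
  rcases eq_or_ne z 0 with rfl | hz
  · rw [ContinuousAt, tendsto_iff_norm_sub_tendsto_zero, hD₀]
    refine squeeze_zero (fun _ => norm_nonneg _)
      (fun y => norm_sub_id_le_of_hasFDerivAt_T (hD y)) ?_
    simpa using (by fun_prop : Continuous fun y : ℂ => ‖y‖ * (2 + ‖y‖)).tendsto 0
  · rw [← funext fun z => (hD z).fderiv]
    exact (contDiffAt_T hz).continuousAt_fderiv one_ne_zero

theorem T_difference_quotient_tendsto_uniformly_general
    (φ dφ : ℂ → ℂ)
    (Cφ : ℝ) (hφ : ∀ z, ‖φ z‖ ≤ Cφ)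
    (Cdφ : ℝ) (hdφ : ∀ z, ‖dφ z‖ ≤ Cdφ)
    (D : ℂ → (ℂ →L[ℝ] ℂ)) (hD : ∀ z : ℂ, HasFDerivAt T (D z) z) :
    TendstoUniformly
      (fun (ε : ℝ) (z : ℂ) => (T (φ z + (ε : ℂ) * dφ z) - T (φ z)) / (ε : ℂ))
      (fun z => D (φ z) (dφ z))
      (nhdsWithin (0 : ℝ) {0}ᶜ) := by
  have hφb : Bornology.IsBounded (Set.range φ) :=
    isBounded_iff_forall_norm_le.2 ⟨Cφ, Set.forall_mem_range.2 hφ⟩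
  have hdφb : Bornology.IsBounded (Set.range dφ) :=
    isBounded_iff_forall_norm_le.2 ⟨Cdφ, Set.forall_mem_range.2 hdφ⟩
  convert tendstoUniformly_differenceQuotient_of_continuous_fderiv hD
    (continuous_of_hasFDerivAt_T hD) hφb hdφb using 2 with ε z
  simp only [Complex.real_smul, div_eq_inv_mul, Complex.ofReal_inv]

theorem T_difference_quotient_tendsto_uniformly
    (φ dφ : ℂ → ℂ) (hφm : Measurable φ) (hdφm : Measurable dφ)
    (Cφ : ℝ) (hφ : ∀ z, ‖φ z‖ ≤ Cφ)
    (Cdφ : ℝ) (hdφ : ∀ z, ‖dφ z‖ ≤ Cdφ)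
    (D : ℂ → (ℂ →L[ℝ] ℂ)) (hD : ∀ z : ℂ, HasFDerivAt T (D z) z) :
    TendstoUniformly
      (fun (ε : ℝ) (z : ℂ) => (T (φ z + (ε : ℂ) * dφ z) - T (φ z)) / (ε : ℂ))
      (fun z => D (φ z) (dφ z))
      (nhdsWithin (0 : ℝ) {0}ᶜ) :=
  T_difference_quotient_tendsto_uniformly_general φ dφ Cφ hφ Cdφ hdφ D hD
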